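/- Let G ≤ Sym_n be a subgroup and SP(G) its coarsest supporting partition. Then Stab•_n(SP(G)) ≤ G ≤ Stab_n(SP(G)); that is, the pointwise stabiliser of SP(G) is contained in G, and G is contained in the setwise stabiliser of SP(G). -/

import Mathlib

/-- Binary strings of length `n`: the set `{0,1}ⁿ`. -/
abbrev Str (n : ℕ) := Fin n → Bool

/-- The action of `Sym_n` on strings, permuting positions: `(π·v)_i = v_{π⁻¹(i)}`. -/
def act {n : ℕ} (π : Equiv.Perm (Fin n)) (v : Str n) : Str n := fun i => v (π.symm i)

/-- The action of `Sym_n` on sets of strings. -/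
def actSet {n : ℕ} (π : Equiv.Perm (Fin n)) (C : Set (Str n)) : Set (Str n) := act π '' C

/-- The (setwise) stabiliser of a set of strings. -/
def setStab {n : ℕ} (C : Set (Str n)) : Set (Equiv.Perm (Fin n)) := {π | actSet π C = C}

/-- The orbit of a set of strings under `Sym_n`. -/
def setOrbit {n : ℕ} (C : Set (Str n)) : Set (Set (Str n)) := {D | ∃ π, D = actSet π C}

/-- An ordered partition of `{0,1}ⁿ`: a tuple of pairwise disjoint nonempty subsets
whose union is everything. -/
def IsOrderedPartition {n m : ℕ} (C : Fin m → Set (Str n)) : Prop :=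
  (∀ i, (C i).Nonempty) ∧ (Pairwise fun i j => Disjoint (C i) (C j)) ∧ (⋃ i, C i) = Set.univ

/-- The stabiliser of an ordered partition (componentwise). -/
def tupStab {n m : ℕ} (C : Fin m → Set (Str n)) : Set (Equiv.Perm (Fin n)) :=
  {π | ∀ i, actSet π (C i) = C i}

/-- The orbit of an ordered partition under the componentwise action of `Sym_n`. -/
def tupOrbit {n m : ℕ} (C : Fin m → Set (Str n)) : Set (Fin m → Set (Str n)) :=
  {D | ∃ π, D = fun i => actSet π (C i)}

/-- Pointwise stabiliser of a partition (setoid) of `[n]`: permutations fixing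
each part setwise. -/
def ptStab {n : ℕ} (s : Setoid (Fin n)) : Set (Equiv.Perm (Fin n)) :=
  {π | ∀ P ∈ s.classes, (π : Fin n → Fin n) '' P = P}

/-- Setwise stabiliser of a partition of `[n]`: permutations mapping parts to parts. -/
def swStab {n : ℕ} (s : Setoid (Fin n)) : Set (Equiv.Perm (Fin n)) :=
  {π | ∀ P ∈ s.classes, (π : Fin n → Fin n) '' P ∈ s.classes}

/-- A partition `s` of `[n]` is a supporting partition of `G` if its pointwise
stabiliser is contained in `G`. -/
def IsSupporting {n : ℕ} (G : Set (Equiv.Perm (Fin n))) (s : Setoid (Fin n)) : Prop :=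
  ∀ π ∈ ptStab s, π ∈ G

/-- `s` is as coarse as `t`: every part of `t` is contained in some part of `s`. -/
def AsCoarseAs {X : Type*} (s t : Setoid X) : Prop :=
  ∀ P ∈ t.classes, ∃ Q ∈ s.classes, P ⊆ Q

/-- `s` is the coarsest supporting partition of `G`. -/
def IsCoarsestSupp {n : ℕ} (G : Set (Equiv.Perm (Fin n))) (s : Setoid (Fin n)) : Prop :=
  IsSupporting G s ∧ ∀ t, IsSupporting G t → AsCoarseAs s t

/-- The intersection `⊓_{a ∈ A} f(a)` of a family of partitions: parts are the
nonempty intersections of parts. -/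
def interSetoid {X ι : Type*} (A : Set ι) (f : ι → Setoid X) : Setoid X where
  r x y := ∀ a ∈ A, (f a).r x y
  iseqv := ⟨fun x a _ => (f a).refl x,
            fun h a ha => (f a).symm (h a ha),
            fun h h' a ha => (f a).trans (h a ha) (h' a ha)⟩

/-- `SP(a)` for a string `a`: the partition of positions according to the bit of `a`. -/
def strSetoid {n : ℕ} (a : Str n) : Setoid (Fin n) where
  r k j := a k = a j
  iseqv := ⟨fun _ => rfl, Eq.symm, Eq.trans⟩

/-- `π ∈ Sym_n` realises a permutation `σ` of the parts of a partition `s` if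
`π(P) = σ(P)` for every part `P`. -/
def Realises {n : ℕ} (π : Equiv.Perm (Fin n)) {s : Setoid (Fin n)}
    (σ : Equiv.Perm s.classes) : Prop :=
  ∀ P : s.classes, (π : Fin n → Fin n) '' (P : Set (Fin n)) = ((σ P : Set (Fin n)))

/-!
Conjugating by `π ∈ G` turns a supporting partition `s` of `G` into the supporting
partition `π · s = s.comap π⁻¹`, so the coarsest one is as coarse as both `π · s` and
`π⁻¹ · s`. Read as relations, this says that `π` preserves the relation of `s` in both
directions, hence permutes its parts.
-/

theorem asCoarseAs_iff_le {X : Type*} {s t : Setoid X} : AsCoarseAs s t ↔ t ≤ s := by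
  constructor
  · intro h x y hxy
    obtain ⟨Q, hQ, hyQ⟩ := h _ (t.mem_classes y)
    obtain ⟨w, rfl⟩ := hQ
    exact s.trans (hyQ hxy) (s.symm (hyQ (t.refl y)))
  · rintro h P ⟨y, rfl⟩
    exact ⟨_, s.mem_classes y, fun x hx => h hx⟩

theorem Setoid.image_mem_classes {α : Type*} {s : Setoid α} (e : α ≃ α)
    (he : ∀ x y, s (e x) (e y) ↔ s x y) {P : Set α} (hP : P ∈ s.classes) :
    e '' P ∈ s.classes := by
  obtain ⟨y, rfl⟩ := hP
  refine ⟨e y, ?_⟩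
  ext x
  rw [e.image_eq_preimage_symm]
  show s (e.symm x) y ↔ s x (e y)
  rw [← he, e.apply_symm_apply]

theorem mem_ptStab_iff {n : ℕ} {s : Setoid (Fin n)} {π : Equiv.Perm (Fin n)} :
    π ∈ ptStab s ↔ ∀ x, s (π x) x := by
  constructor
  · intro h x
    have hx : π x ∈ π '' {z | s z x} := ⟨x, s.refl x, rfl⟩
    rwa [h _ (s.mem_classes x)] at hx
  · rintro h P ⟨y, rfl⟩
    refine Set.Subset.antisymm ?_ fun x hx => ⟨π.symm x, ?_, π.apply_symm_apply x⟩
    · rintro _ ⟨x, hx, rfl⟩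
      exact s.trans (h x) hx
    · have := h (π.symm x)
      rw [π.apply_symm_apply] at this
      exact s.trans (s.symm this) hx

theorem IsSupporting.comap_inv {n : ℕ} {G : Subgroup (Equiv.Perm (Fin n))}
    {s : Setoid (Fin n)} (hs : IsSupporting (G : Set (Equiv.Perm (Fin n))) s)
    {π : Equiv.Perm (Fin n)} (hπ : π ∈ G) :
    IsSupporting (G : Set (Equiv.Perm (Fin n))) (s.comap ⇑π⁻¹) := by
  intro σ hσ
  rw [mem_ptStab_iff] at hσ
  have hconj : π⁻¹ * σ * π ∈ G := hs _ <| mem_ptStab_iff.2 fun y => by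
    simpa [Setoid.comap_rel] using hσ (π y)
  simpa [mul_assoc] using G.mul_mem (G.mul_mem hπ hconj) (G.inv_mem hπ)

theorem IsCoarsestSupp.comap_inv_le {n : ℕ} {G : Subgroup (Equiv.Perm (Fin n))}
    {s : Setoid (Fin n)} (hs : IsCoarsestSupp (G : Set (Equiv.Perm (Fin n))) s)
    {π : Equiv.Perm (Fin n)} (hπ : π ∈ G) : s.comap ⇑π⁻¹ ≤ s :=
  asCoarseAs_iff_le.1 (hs.2 _ (hs.1.comap_inv hπ))

theorem IsCoarsestSupp.rel_apply_iff {n : ℕ} {G : Subgroup (Equiv.Perm (Fin n))}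
    {s : Setoid (Fin n)} (hs : IsCoarsestSupp (G : Set (Equiv.Perm (Fin n))) s)
    {π : Equiv.Perm (Fin n)} (hπ : π ∈ G) (x y : Fin n) : s (π x) (π y) ↔ s x y := by
  constructor
  · intro h
    simpa [Setoid.comap_rel] using hs.comap_inv_le (G.inv_mem hπ) h
  · intro h
    exact hs.comap_inv_le hπ (by simpa [Setoid.comap_rel] using h)

/-- for the coarsest supporting partition `SP(G)` of a subgroup
`G ≤ Sym_n`, `Stab•_n(SP(G)) ≤ G ≤ Stab_n(SP(G))`. -/
theorem stmt_5 {n : ℕ} (G : Subgroup (Equiv.Perm (Fin n))) (s : Setoid (Fin n))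
    (hs : IsCoarsestSupp (G : Set (Equiv.Perm (Fin n))) s) :
    ptStab s ⊆ (G : Set (Equiv.Perm (Fin n))) ∧
      (G : Set (Equiv.Perm (Fin n))) ⊆ swStab s :=
  ⟨hs.1, fun _ hπ _ hP => Setoid.image_mem_classes _ (hs.rel_apply_iff hπ) hP⟩
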